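/- If symmetric matrices satisfy 0 ≺ X and the block matrix [[X, I],[I, Y]] ≻ 0, then all eigenvalues of the product XY are real and positive; in particular tr(XY) > 0 and det(XY) > 0, so det(I − XY) ≠ 0 provided additionally 1 is not an eigenvalue of XY — and indeed [[X,I],[I,Y]] ≻ 0 implies every eigenvalue of XY is strictly greater than 1. -/

import Mathlib

/-!
If `X * Y *ᵥ v = μ • v` with `v ≠ 0`, the quadratic form of `[[X, 1], [1, Y]]` at `(-Y v, v)`
equals `(μ - 1) * v* Y v`, and `v* Y v > 0` because `Y` is a diagonal block; so every complex
eigenvalue of `X * Y` is real and exceeds `1`. The trace and determinant are the sum and product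
of these eigenvalues.
-/

open Matrix Polynomial
open scoped ComplexOrder

namespace Matrix

variable {n : Type*} [Fintype n] [DecidableEq n]

section RCLike

variable {𝕜 : Type*} [RCLike 𝕜]

lemma PosDef.map_ofReal {A : Matrix n n ℝ} (hA : A.PosDef) :
    (A.map (algebraMap ℝ 𝕜)).PosDef := by
  open scoped MatrixOrder in
  obtain ⟨B, rfl⟩ := CStarAlgebra.nonneg_iff_eq_star_mul_self.mp hA.posSemidef.nonneg
  have hsemi : ((star B * B).map (algebraMap ℝ 𝕜)).PosSemidef := by
    rw [Matrix.map_mul, star_eq_conjTranspose, conjTranspose_map _ (fun r => by simp)]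
    exact posSemidef_conjTranspose_mul_self _
  rw [hsemi.posDef_iff_det_ne_zero, ← RingHom.mapMatrix_apply, ← RingHom.map_det]
  exact (_root_.map_ne_zero _).mpr hA.det_pos.ne'

lemma one_lt_of_mul_mulVec_eq_smul {X Y : Matrix n n 𝕜} (h : (fromBlocks X 1 1 Y).PosDef)
    {v : n → 𝕜} (hv : v ≠ 0) {μ : 𝕜} (hμ : (X * Y) *ᵥ v = μ • v) : 1 < μ := by
  have hY : Y.PosDef := h.submatrix (e := Sum.inr) Sum.inr_injective
  -- `fromBlocks X 1 1 Y *ᵥ (-(Y *ᵥ v) ⊕ᵥ v) = ((1 - μ) • v) ⊕ᵥ 0`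
  have hq : star (-(Y *ᵥ v) ⊕ᵥ v) ⬝ᵥ (fromBlocks X 1 1 Y *ᵥ (-(Y *ᵥ v) ⊕ᵥ v))
      = (μ - 1) * (star v ⬝ᵥ (Y *ᵥ v)) := by
    have hXYv : X *ᵥ -(Y *ᵥ v) + v = (1 - μ) • v := by
      rw [mulVec_neg, mulVec_mulVec, hμ, sub_smul, one_smul, neg_add_eq_sub]
    rw [fromBlocks_mulVec]
    simp only [Sum.elim_comp_inl, Sum.elim_comp_inr, one_mulVec, neg_add_cancel, hXYv,
      Function.star_sumElim, sumElim_dotProduct_sumElim, dotProduct_zero, add_zero, star_neg,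
      neg_dotProduct, dotProduct_smul, star_mulVec, ← dotProduct_mulVec, smul_eq_mul, hY.1.eq]
    ring
  have hq_pos := h.dotProduct_mulVec_pos (x := -(Y *ᵥ v) ⊕ᵥ v) fun h0 => hv <| by
    simpa using congrArg (· ∘ Sum.inr) h0
  rw [hq] at hq_pos
  have hβ := hY.dotProduct_mulVec_pos hv
  rw [← sub_pos, ← mul_inv_cancel_right₀ hβ.ne' (μ - 1)]
  exact mul_pos hq_pos (inv_pos.mpr hβ)

lemma one_lt_of_isRoot_charpoly_mul {X Y : Matrix n n 𝕜} (h : (fromBlocks X 1 1 Y).PosDef)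
    {μ : 𝕜} (hμ : (X * Y).charpoly.IsRoot μ) : 1 < μ := by
  rw [← mem_spectrum_iff_isRoot_charpoly, ← spectrum_toLin',
    ← Module.End.hasEigenvalue_iff_mem_spectrum] at hμ
  obtain ⟨v, hv⟩ := hμ.exists_hasEigenvector
  exact one_lt_of_mul_mulVec_eq_smul h hv.2 (by simpa using hv.apply_eq_smul)

end RCLike

section AlgClosed

variable {K : Type*} [Field K] [IsAlgClosed K] [PartialOrder K] [IsStrictOrderedRing K]
  {M : Matrix n n K}

lemma det_pos_of_forall_mem_roots_charpoly_pos (h : ∀ μ ∈ M.charpoly.roots, 0 < μ) :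
    0 < M.det := by
  rw [det_eq_prod_roots_charpoly]
  exact Multiset.prod_pos h

lemma trace_pos_of_forall_mem_roots_charpoly_pos [Nonempty n]
    (h : ∀ μ ∈ M.charpoly.roots, 0 < μ) : 0 < M.trace := by
  have hne : M.charpoly.roots ≠ 0 := by
    rw [← Multiset.card_pos, IsAlgClosed.card_roots_eq_natDegree, charpoly_natDegree_eq_dim]
    exact Fintype.card_pos
  rw [trace_eq_sum_roots_charpoly]
  simpa using Multiset.sum_lt_sum_of_nonempty (f := fun _ => 0) (g := id) hne h

end AlgClosed

end Matrix

theorem eigenvalues_XY_gt_one_general (n : ℕ) (hn : 0 < n) (X Y : Matrix (Fin n) (Fin n) ℝ)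
    (h : (Matrix.fromBlocks X 1 1 Y).PosDef) :
    (∀ μ : ℂ, ((X * Y).map (algebraMap ℝ ℂ)).charpoly.IsRoot μ →
        μ.im = 0 ∧ 1 < μ.re) ∧
    0 < (X * Y).trace ∧
    0 < (X * Y).det ∧
    (1 - X * Y).det ≠ 0 := by
  have : Nonempty (Fin n) := ⟨⟨0, hn⟩⟩
  have hℂ : (fromBlocks (X.map (algebraMap ℝ ℂ)) 1 1 (Y.map (algebraMap ℝ ℂ))).PosDef := by
    simpa [fromBlocks_map] using h.map_ofReal (𝕜 := ℂ)
  have hroots (μ : ℂ) (hμ : ((X * Y).map (algebraMap ℝ ℂ)).charpoly.IsRoot μ) : 1 < μ := by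
    rw [Matrix.map_mul] at hμ
    exact one_lt_of_isRoot_charpoly_mul hℂ hμ
  have hpos (μ : ℂ) (hμ : μ ∈ ((X * Y).map (algebraMap ℝ ℂ)).charpoly.roots) : 0 < μ :=
    zero_lt_one.trans (hroots μ (isRoot_of_mem_roots hμ))
  refine ⟨fun μ hμ => ?_, ?_, ?_, fun h1 => ?_⟩
  · obtain ⟨hre, him⟩ := Complex.lt_def.mp (hroots μ hμ)
    exact ⟨him.symm, hre⟩
  · have := trace_pos_of_forall_mem_roots_charpoly_pos hpos
    rwa [← AddMonoidHom.map_trace, Complex.coe_algebraMap, Complex.zero_lt_real] at this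
  · have := det_pos_of_forall_mem_roots_charpoly_pos hpos
    rwa [← RingHom.mapMatrix_apply, ← RingHom.map_det, Complex.coe_algebraMap,
      Complex.zero_lt_real] at this
  · refine (hroots 1 ?_).false
    rw [charpoly_map, ← map_one (algebraMap ℝ ℂ)]
    apply IsRoot.map
    rwa [IsRoot, eval_charpoly, scalar_apply, diagonal_one]

/-- If X ≻ 0 and [[X,I],[I,Y]] ≻ 0 (X, Y symmetric), then every (complex)
eigenvalue of XY is real and strictly greater than 1; in particular
tr(XY) > 0, det(XY) > 0, and det(I − XY) ≠ 0. -/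
theorem eigenvalues_XY_gt_one (n : ℕ) (hn : 0 < n) (X Y : Matrix (Fin n) (Fin n) ℝ)
    (hX : X.IsSymm) (hY : Y.IsSymm) (hXpos : X.PosDef)
    (h : (Matrix.fromBlocks X 1 1 Y).PosDef) :
    (∀ μ : ℂ, ((X * Y).map (algebraMap ℝ ℂ)).charpoly.IsRoot μ →
        μ.im = 0 ∧ 1 < μ.re) ∧
    0 < (X * Y).trace ∧
    0 < (X * Y).det ∧
    (1 - X * Y).det ≠ 0 :=
  eigenvalues_XY_gt_one_general n hn X Y h
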